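/- Let k be a field and m ≥ 2. For every i ∈ ℤ/m and all integers r > s ≥ 0, one has dim_k End(S_{i+1}(r) ⊕ S_i(s+1)) = dim_k End(S_i(r+1) ⊕ S_{i+1}(s)) + 1. -/

import Mathlib

open Module

variable (k : Type) [Field k] (m : ℕ)

/-- The space of homomorphisms between two nilpotent representations of the cyclic quiver
with `m` vertices, each encoded as a `ℤ/m`-graded vector space together with a (nilpotent)
operator homogeneous of degree `1`: a homomorphism is a linear map preserving the grading
and intertwining the two operators. -/
def RepHom {V W : Type} [AddCommGroup V] [Module k V] [AddCommGroup W] [Module k W]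
    (gV : ZMod m → Submodule k V) (TV : V →ₗ[k] V)
    (gW : ZMod m → Submodule k W) (TW : W →ₗ[k] W) : Submodule k (V →ₗ[k] W) where
  carrier := {f | (∀ j : ZMod m, ∀ v ∈ gV j, f v ∈ gW j) ∧ f ∘ₗ TV = TW ∘ₗ f}
  add_mem' := by
    rintro f g ⟨hf1, hf2⟩ ⟨hg1, hg2⟩
    refine ⟨fun j v hv => ?_, ?_⟩
    · simpa using add_mem (hf1 j v hv) (hg1 j v hv)
    · simp only [LinearMap.add_comp, LinearMap.comp_add, hf2, hg2]
  zero_mem' := ⟨fun j v hv => by simp, by simp⟩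
  smul_mem' := by
    rintro c f ⟨hf1, hf2⟩
    refine ⟨fun j v hv => ?_, ?_⟩
    · simpa using Submodule.smul_mem _ c (hf1 j v hv)
    · simp only [LinearMap.smul_comp, LinearMap.comp_smul, hf2]

/-- The shift operator `e_t ↦ e_{t+1}` (and `e_{a-1} ↦ 0`) on `k^a`; this is the underlying
nilpotent operator of the indecomposable representation `S_i(a)`. -/
def shiftMap (a : ℕ) : (Fin a → k) →ₗ[k] (Fin a → k) where
  toFun f t := if h : (t : ℕ) = 0 then 0
    else f ⟨(t : ℕ) - 1, Nat.lt_of_le_of_lt (Nat.sub_le _ _) t.isLt⟩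
  map_add' f g := by
    funext t
    by_cases h : (t : ℕ) = 0 <;> simp [h]
  map_smul' c f := by
    funext t
    by_cases h : (t : ℕ) = 0 <;> simp [h]

/-- The grading of the indecomposable representation `S_i(a)` on `k^a`: the basis vector
`e_t` is homogeneous of degree `i + t (mod m)`. -/
def sGrading (i : ZMod m) (a : ℕ) (j : ZMod m) : Submodule k (Fin a → k) where
  carrier := {f | ∀ t : Fin a, i + ((t : ℕ) : ZMod m) ≠ j → f t = 0}
  add_mem' := fun hf hg t ht => by
    rw [Pi.add_apply, hf t ht, hg t ht, add_zero]
  zero_mem' := fun t _ => rfl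
  smul_mem' := fun c f hf t ht => by rw [Pi.smul_apply, hf t ht, smul_zero]

/-!
Evaluation at the generator `e_0` identifies `Hom(S_i(a), W)` with the vectors of `W` of
degree `i` killed by `T^a`. In `W = S_j(b)` these are spanned by the basis vectors `e_c` with
`b - a ≤ c < b` and `c ≡ i - j (mod m)`, so `dim Hom(S_i(a), S_j(b))` counts the integers of an
interval in a residue class. Both endomorphism spaces split into four such Hom spaces, and shifting
the intervals by one matches the eight counts except for `c = 0` in `End(S_i(s+1))`: the identity.
-/

open Finset

namespace RepHom

variable {k m}
variable {U V V' W : Type} [AddCommGroup U] [Module k U] [AddCommGroup V] [Module k V]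
  [AddCommGroup V'] [Module k V'] [AddCommGroup W] [Module k W]
  {gU : ZMod m → Submodule k U} {TU : U →ₗ[k] U}
  {gV : ZMod m → Submodule k V} {TV : V →ₗ[k] V}
  {gV' : ZMod m → Submodule k V'} {TV' : V' →ₗ[k] V'}
  {gW : ZMod m → Submodule k W} {TW : W →ₗ[k] W}

lemma comp_mem {f : V →ₗ[k] W} {g : U →ₗ[k] V} (hf : f ∈ RepHom k m gV TV gW TW)
    (hg : g ∈ RepHom k m gU TU gV TV) : f ∘ₗ g ∈ RepHom k m gU TU gW TW :=
  ⟨fun j u hu => hf.1 j _ (hg.1 j u hu), by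
    rw [LinearMap.comp_assoc, hg.2, ← LinearMap.comp_assoc, hf.2, LinearMap.comp_assoc]⟩

lemma inl_mem : LinearMap.inl k V V' ∈
    RepHom k m gV TV (fun j => (gV j).prod (gV' j)) (TV.prodMap TV') :=
  ⟨fun j v hv => ⟨hv, zero_mem _⟩, by ext <;> simp⟩

lemma inr_mem : LinearMap.inr k V V' ∈
    RepHom k m gV' TV' (fun j => (gV j).prod (gV' j)) (TV.prodMap TV') :=
  ⟨fun j v hv => ⟨zero_mem _, hv⟩, by ext <;> simp⟩

lemma fst_mem : LinearMap.fst k V V' ∈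
    RepHom k m (fun j => (gV j).prod (gV' j)) (TV.prodMap TV') gV TV :=
  ⟨fun j v hv => hv.1, by ext <;> simp⟩

lemma snd_mem : LinearMap.snd k V V' ∈
    RepHom k m (fun j => (gV j).prod (gV' j)) (TV.prodMap TV') gV' TV' :=
  ⟨fun j v hv => hv.2, by ext <;> simp⟩

lemma map_pow_apply {f : V →ₗ[k] W} (hf : f ∈ RepHom k m gV TV gW TW) (n : ℕ) (v : V) :
    f ((TV ^ n) v) = (TW ^ n) (f v) := by
  induction n generalizing v with
  | zero => simp
  | succ n ih =>
    rw [pow_succ, Module.End.mul_apply, ih, pow_succ, Module.End.mul_apply]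
    exact congrArg _ (LinearMap.congr_fun hf.2 v)

def coprodEquiv : RepHom k m (fun j => (gV j).prod (gV' j)) (TV.prodMap TV') gW TW ≃ₗ[k]
    RepHom k m gV TV gW TW × RepHom k m gV' TV' gW TW where
  toFun f := (⟨f.1 ∘ₗ LinearMap.inl k V V', comp_mem f.2 inl_mem⟩,
    ⟨f.1 ∘ₗ LinearMap.inr k V V', comp_mem f.2 inr_mem⟩)
  map_add' _ _ := rfl
  map_smul' _ _ := rfl
  invFun p := ⟨p.1.1 ∘ₗ LinearMap.fst k V V' + p.2.1 ∘ₗ LinearMap.snd k V V',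
    add_mem (comp_mem p.1.2 fst_mem) (comp_mem p.2.2 snd_mem)⟩
  left_inv f := by ext <;> simp [Prod.mk_zero_zero]
  right_inv p := by ext <;> simp

def prodEquiv : RepHom k m gU TU (fun j => (gV j).prod (gV' j)) (TV.prodMap TV') ≃ₗ[k]
    RepHom k m gU TU gV TV × RepHom k m gU TU gV' TV' where
  toFun f := (⟨LinearMap.fst k V V' ∘ₗ f.1, comp_mem fst_mem f.2⟩,
    ⟨LinearMap.snd k V V' ∘ₗ f.1, comp_mem snd_mem f.2⟩)
  map_add' _ _ := rfl
  map_smul' _ _ := rfl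
  invFun p := ⟨LinearMap.inl k V V' ∘ₗ p.1.1 + LinearMap.inr k V V' ∘ₗ p.2.1,
    add_mem (comp_mem inl_mem p.1.2) (comp_mem inr_mem p.2.2)⟩
  left_inv f := by ext <;> simp
  right_inv p := by ext <;> simp

variable [FiniteDimensional k U] [FiniteDimensional k V] [FiniteDimensional k V']
  [FiniteDimensional k W]

lemma finrank_prod_left :
    finrank k (RepHom k m (fun j => (gV j).prod (gV' j)) (TV.prodMap TV') gW TW) =
      finrank k (RepHom k m gV TV gW TW) + finrank k (RepHom k m gV' TV' gW TW) := by
  rw [coprodEquiv.finrank_eq, finrank_prod]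

lemma finrank_prod_right :
    finrank k (RepHom k m gU TU (fun j => (gV j).prod (gV' j)) (TV.prodMap TV')) =
      finrank k (RepHom k m gU TU gV TV) + finrank k (RepHom k m gU TU gV' TV') := by
  rw [prodEquiv.finrank_eq, finrank_prod]

end RepHom

section Uniserial

variable {k m}

lemma shiftMap_apply {a : ℕ} (v : Fin a → k) (u : Fin a) :
    shiftMap k a v u = if (u : ℕ) = 0 then 0
      else v ⟨(u : ℕ) - 1, Nat.lt_of_le_of_lt (Nat.sub_le _ _) u.isLt⟩ := rfl

lemma mem_sGrading_iff {i j : ZMod m} {a : ℕ} {v : Fin a → k} :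
    v ∈ sGrading k m i a j ↔ ∀ t : Fin a, i + ((t : ℕ) : ZMod m) ≠ j → v t = 0 :=
  Iff.rfl

lemma shiftMap_pow_apply {b : ℕ} (n : ℕ) (v : Fin b → k) (u : Fin b) :
    (shiftMap k b ^ n) v u =
      if h : n ≤ (u : ℕ) then v ⟨(u : ℕ) - n, by have := u.isLt; omega⟩ else 0 := by
  induction n generalizing v u with
  | zero => simp
  | succ n ih =>
    rw [pow_succ, Module.End.mul_apply, ih]
    by_cases h : n ≤ (u : ℕ)
    · rw [dif_pos h, shiftMap_apply]
      by_cases h' : n + 1 ≤ (u : ℕ)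
      · rw [if_neg (by simp; omega), dif_pos h']
        exact congrArg v (Fin.ext (by simp; omega))
      · rw [if_pos (by simp; omega), dif_neg h']
    · rw [dif_neg h, dif_neg (by omega)]

lemma shiftMap_pow_single_zero (n s : ℕ) :
    (shiftMap k (n + 1) ^ s) (Pi.single 0 1) =
      if h : s < n + 1 then Pi.single ⟨s, h⟩ 1 else 0 := by
  funext u
  rw [shiftMap_pow_apply]
  by_cases h : s < n + 1
  · rw [dif_pos h]
    by_cases hsu : s ≤ (u : ℕ)
    · simp [hsu, Pi.single_apply, Fin.ext_iff, show (u : ℕ) - s = 0 ↔ (u : ℕ) = s by omega]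
    · simp [hsu, Pi.single_apply, Fin.ext_iff]
      omega
  · rw [dif_neg h, dif_neg (by omega)]
    rfl

lemma shiftMap_mem_sGrading (i : ZMod m) (a : ℕ) {j : ZMod m} {v : Fin a → k}
    (hv : v ∈ sGrading k m i a j) : shiftMap k a v ∈ sGrading k m i a (j + 1) := by
  intro u hu
  rw [shiftMap_apply]
  split_ifs with h0
  · rfl
  · refine hv _ fun hj => hu ?_
    rw [← hj, add_assoc, ← Nat.cast_add_one, Nat.sub_add_cancel (Nat.pos_of_ne_zero h0)]

lemma single_zero_mem_sGrading (i : ZMod m) (n : ℕ) :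
    Pi.single 0 1 ∈ sGrading k m i (n + 1) i := by
  intro u hu
  exact Pi.single_eq_of_ne (fun h => hu (by simp [h])) 1

lemma mem_ker_shiftMap_pow_iff {a b : ℕ} {w : Fin b → k} :
    w ∈ LinearMap.ker (shiftMap k b ^ a) ↔ ∀ u : Fin b, (u : ℕ) < b - a → w u = 0 := by
  rw [LinearMap.mem_ker, funext_iff]
  constructor
  · intro h u hu
    simpa [shiftMap_pow_apply] using h ⟨u + a, by omega⟩
  · intro h u
    rw [shiftMap_pow_apply]
    split_ifs
    · exact h _ (by simp; omega)
    · rfl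

end Uniserial

section HomFromUniserial

variable {k m}
variable {W : Type} [AddCommGroup W] [Module k W]
  {gW : ZMod m → Submodule k W} {TW : W →ₗ[k] W}

lemma pow_apply_mem_of_homogeneous (hT : ∀ j, ∀ w ∈ gW j, TW w ∈ gW (j + 1)) (n : ℕ)
    {j : ZMod m} {w : W} (hw : w ∈ gW j) : (TW ^ n) w ∈ gW (j + n) := by
  induction n with
  | zero => simpa using hw
  | succ n ih =>
    rw [pow_succ', Module.End.mul_apply, Nat.cast_succ, ← add_assoc]
    exact hT _ _ ih

variable (TW) in
abbrev liftOfGenerator (n : ℕ) (w : W) : (Fin (n + 1) → k) →ₗ[k] W :=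
  Fintype.linearCombination k fun t : Fin (n + 1) => (TW ^ (t : ℕ)) w

lemma liftOfGenerator_shiftMap_pow {n : ℕ} {w : W} (hw : (TW ^ (n + 1)) w = 0) (s : ℕ) :
    liftOfGenerator TW n w ((shiftMap k (n + 1) ^ s) (Pi.single 0 1)) = (TW ^ s) w := by
  rw [shiftMap_pow_single_zero]
  split_ifs with hs
  · rw [Fintype.linearCombination_apply_single, one_smul]
  · rw [map_zero, ← Nat.sub_add_cancel (not_lt.mp hs), pow_add, Module.End.mul_apply, hw,
      map_zero]

lemma single_eq_shiftMap_pow {n : ℕ} (t : Fin (n + 1)) :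
    (Pi.single t 1 : Fin (n + 1) → k) = (shiftMap k (n + 1) ^ (t : ℕ)) (Pi.single 0 1) := by
  rw [shiftMap_pow_single_zero, dif_pos t.isLt]

lemma apply_single_zero_mem {i : ZMod m} {n : ℕ} {f : (Fin (n + 1) → k) →ₗ[k] W}
    (hf : f ∈ RepHom k m (sGrading k m i (n + 1)) (shiftMap k (n + 1)) gW TW) :
    f (Pi.single 0 1) ∈ gW i ⊓ LinearMap.ker (TW ^ (n + 1)) :=
  ⟨hf.1 i _ (single_zero_mem_sGrading i n), LinearMap.mem_ker.mpr <| by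
    rw [← RepHom.map_pow_apply hf, shiftMap_pow_single_zero, dif_neg (lt_irrefl _), map_zero]⟩

variable (hT : ∀ j, ∀ w ∈ gW j, TW w ∈ gW (j + 1))
include hT

lemma liftOfGenerator_mem (i : ZMod m) (n : ℕ) {w : W}
    (hw : w ∈ gW i ⊓ LinearMap.ker (TW ^ (n + 1))) :
    liftOfGenerator TW n w ∈
      RepHom k m (sGrading k m i (n + 1)) (shiftMap k (n + 1)) gW TW := by
  refine ⟨fun j v hv => ?_, LinearMap.pi_ext' fun t => LinearMap.ext_ring ?_⟩
  · rw [Fintype.linearCombination_apply]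
    refine Submodule.sum_mem _ fun t _ => ?_
    by_cases ht : i + (t : ℕ) = j
    · exact Submodule.smul_mem _ _ (ht ▸ pow_apply_mem_of_homogeneous hT t hw.1)
    · rw [hv t ht, zero_smul]
      exact zero_mem _
  · have hw0 : (TW ^ (n + 1)) w = 0 := hw.2
    simp only [LinearMap.comp_apply, LinearMap.single_apply, single_eq_shiftMap_pow t]
    rw [← Module.End.mul_apply, ← pow_succ', liftOfGenerator_shiftMap_pow hw0,
      liftOfGenerator_shiftMap_pow hw0, pow_succ', Module.End.mul_apply]

/-- `S_i(n+1)` is generated by `e_0` in degree `i` subject only to `T^(n+1) e_0 = 0`. -/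
def repHomUniserialEquiv (i : ZMod m) (n : ℕ) :
    RepHom k m (sGrading k m i (n + 1)) (shiftMap k (n + 1)) gW TW ≃ₗ[k]
      ↥(gW i ⊓ LinearMap.ker (TW ^ (n + 1))) where
  toFun f := ⟨f.1 (Pi.single 0 1), apply_single_zero_mem f.2⟩
  map_add' _ _ := rfl
  map_smul' _ _ := rfl
  invFun w := ⟨liftOfGenerator TW n w.1, liftOfGenerator_mem hT i n w.2⟩
  left_inv f := Subtype.ext <| LinearMap.pi_ext' fun t => LinearMap.ext_ring <| by
    simp only [LinearMap.comp_apply, LinearMap.single_apply, single_eq_shiftMap_pow t]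
    rw [liftOfGenerator_shiftMap_pow (apply_single_zero_mem f.2).2, RepHom.map_pow_apply f.2]
  right_inv w := Subtype.ext <| by
    simp [Fintype.linearCombination_apply_single]

end HomFromUniserial

def residueCount (lo hi : ℕ) (d : ZMod m) : ℕ :=
  #{c ∈ Ico lo hi | ((c : ℕ) : ZMod m) = d}

section ResidueCount

variable {m}

lemma residueCount_add_one_add_one (lo hi : ℕ) (d : ZMod m) :
    residueCount m (lo + 1) (hi + 1) (d + 1) = residueCount m lo hi d := by
  rw [residueCount, residueCount, ← map_add_right_Ico, filter_map, card_map]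
  congr 1
  exact filter_congr fun c _ => by simp

lemma residueCount_add_one_right {lo hi : ℕ} (h : lo ≤ hi) (d : ZMod m) :
    residueCount m lo (hi + 1) d =
      residueCount m lo hi d + if (hi : ZMod m) = d then 1 else 0 := by
  rw [residueCount, residueCount, ← insert_Ico_right_eq_Ico_add_one h, filter_insert]
  split_ifs
  · rw [card_insert_of_notMem (by simp)]
  · rfl

lemma residueCount_eq_add_one_left {lo hi : ℕ} (h : lo < hi) (d : ZMod m) :
    residueCount m lo hi d =
      (if (lo : ZMod m) = d then 1 else 0) + residueCount m (lo + 1) hi d := by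
  rw [residueCount, residueCount, ← insert_Ico_add_one_left_eq_Ico h, filter_insert]
  split_ifs
  · rw [card_insert_of_notMem (by simp), add_comm]
  · rw [zero_add]

end ResidueCount

def uniserialHomDim (i j : ZMod m) (a b : ℕ) : ℕ := residueCount m (b - a) b (i - j)

section FinrankUniserial

variable {k m}

lemma card_fin_filter_eq_card_Ico_filter (lo b : ℕ) (p : ℕ → Prop) [DecidablePred p] :
    #{u : Fin b | lo ≤ (u : ℕ) ∧ p u} = #{c ∈ Ico lo b | p c} := by
  refine card_bij (fun u _ => (u : ℕ)) (fun u hu => ?_) (fun u _ v _ h => Fin.ext h)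
    (fun c hc => ?_)
  · simp only [mem_filter, mem_univ, true_and] at hu
    simp [hu.1, hu.2, u.isLt]
  · simp only [mem_filter, mem_Ico] at hc
    exact ⟨⟨c, hc.1.2⟩, by simp [hc.1.1, hc.2], rfl⟩

lemma finrank_sGrading_inf_ker (i j : ZMod m) (a b : ℕ) :
    finrank k ↥(sGrading k m j b i ⊓ LinearMap.ker (shiftMap k b ^ a)) =
      residueCount m (b - a) b (i - j) := by
  classical
  let s : Set (Fin b) := {u | b - a ≤ (u : ℕ) ∧ ((u : ℕ) : ZMod m) = i - j}
  have hsupp : sGrading k m j b i ⊓ LinearMap.ker (shiftMap k b ^ a) =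
      ⨅ u ∈ sᶜ, LinearMap.ker (LinearMap.proj u : (Fin b → k) →ₗ[k] k) := by
    ext w
    rw [Submodule.mem_inf, mem_sGrading_iff, mem_ker_shiftMap_pow_iff]
    simp only [Submodule.mem_iInf, LinearMap.mem_ker, LinearMap.proj_apply]
    constructor
    · rintro ⟨hdeg, hlow⟩ u hu
      by_cases hlt : (u : ℕ) < b - a
      · exact hlow u hlt
      · exact hdeg u fun h => hu ⟨by omega, by rw [← h]; ring⟩
    · intro h
      exact ⟨fun u hu => h u fun hs => hu (by rw [hs.2]; ring),
        fun u hu => h u fun hs => by have := hs.1; omega⟩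
  rw [hsupp, (LinearMap.iInfKerProjEquiv k (fun _ => k) disjoint_compl_right
    (by simp)).finrank_eq, finrank_fintype_fun_eq_card, ← Set.toFinset_card,
    Set.toFinset_ofPred]
  exact card_fin_filter_eq_card_Ico_filter (b - a) b fun c => (c : ZMod m) = i - j

theorem finrank_repHom_sGrading (i j : ZMod m) (a b : ℕ) :
    finrank k (RepHom k m (sGrading k m i a) (shiftMap k a) (sGrading k m j b) (shiftMap k b)) =
      uniserialHomDim m i j a b := by
  cases a with
  | zero =>
    rw [finrank_zero_of_subsingleton]
    simp [uniserialHomDim, residueCount]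
  | succ n =>
    rw [(repHomUniserialEquiv (fun _ _ hw => shiftMap_mem_sGrading j b hw) i n).finrank_eq,
      finrank_sGrading_inf_ker]
    rfl

end FinrankUniserial

variable {m} in
lemma uniserialHomDim_exchange (hm : 2 ≤ m) (i : ZMod m) {r s : ℕ} (hrs : s < r) :
    uniserialHomDim m (i + 1) (i + 1) r r + uniserialHomDim m i (i + 1) (s + 1) r
        + (uniserialHomDim m (i + 1) i r (s + 1) + uniserialHomDim m i i (s + 1) (s + 1))
      = uniserialHomDim m i i (r + 1) (r + 1) + uniserialHomDim m (i + 1) i s (r + 1)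
        + (uniserialHomDim m i (i + 1) (r + 1) s + uniserialHomDim m (i + 1) (i + 1) s s) + 1 := by
  have : Fact (1 < m) := ⟨hm⟩
  simp only [uniserialHomDim, Nat.sub_self, sub_self, add_sub_cancel_left, sub_add_cancel_left,
    Nat.sub_eq_zero_of_le hrs, Nat.sub_eq_zero_of_le (Nat.le_succ_of_le hrs.le)]
  have hpeel_one : residueCount m 0 (s + 1) 1 = residueCount m 0 s 0 := by
    rw [residueCount_eq_add_one_left s.succ_pos, ← zero_add (1 : ZMod m),
      residueCount_add_one_add_one]
    simp
  have hshift_neg_one : residueCount m (r - (s + 1)) r (-1) =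
      residueCount m (r - s) r 0 + if (r : ZMod m) = 0 then 1 else 0 := by
    rw [← residueCount_add_one_right (Nat.sub_le r s), ← residueCount_add_one_add_one,
      neg_add_cancel, show r - (s + 1) + 1 = r - s by omega]
  have hshift_one : residueCount m (r + 1 - s) (r + 1) 1 = residueCount m (r - s) r 0 := by
    rw [show r + 1 - s = r - s + 1 by omega, ← zero_add (1 : ZMod m),
      residueCount_add_one_add_one]
  have hpeel_zero : residueCount m 0 (s + 1) 0 = 1 + residueCount m 0 s (-1) := by
    rw [residueCount_eq_add_one_left s.succ_pos, ← neg_add_cancel (1 : ZMod m),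
      residueCount_add_one_add_one]
    simp
  have hextend := residueCount_add_one_right (Nat.zero_le r) (0 : ZMod m)
  omega

/-- Let `k` be a field and `m ≥ 2`. For every vertex `i ∈ ℤ/m` and all
integers `r > s ≥ 0`, one has
`dim_k End(S_{i+1}(r) ⊕ S_i(s+1)) = dim_k End(S_i(r+1) ⊕ S_{i+1}(s)) + 1`,
where direct sums carry the componentwise grading and operator. -/
theorem dim_end_sum_comparison (hm : 2 ≤ m) (i : ZMod m) (r s : ℕ) (hrs : s < r) :
    finrank k (RepHom k m
        (fun j => (sGrading k m (i + 1) r j).prod (sGrading k m i (s + 1) j))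
        ((shiftMap k r).prodMap (shiftMap k (s + 1)))
        (fun j => (sGrading k m (i + 1) r j).prod (sGrading k m i (s + 1) j))
        ((shiftMap k r).prodMap (shiftMap k (s + 1))))
      = finrank k (RepHom k m
        (fun j => (sGrading k m i (r + 1) j).prod (sGrading k m (i + 1) s j))
        ((shiftMap k (r + 1)).prodMap (shiftMap k s))
        (fun j => (sGrading k m i (r + 1) j).prod (sGrading k m (i + 1) s j))
        ((shiftMap k (r + 1)).prodMap (shiftMap k s))) + 1 := by
  simp only [RepHom.finrank_prod_left, RepHom.finrank_prod_right, finrank_repHom_sGrading]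
  exact uniserialHomDim_exchange hm i hrs
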